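/- Let p₁,q₁,p₂,q₂,p₁₂,q₁₂ be positive integers with q₁₂ dividing p₁₂. Set s_j := q₁₂·p_j and ℓ_j := q_j·s_j for j=1,2, and fix n₀, m₀ ∈ ℤ. For k₁ ∈ {0,…,ℓ₁−1} and k₂ ∈ {0,…,ℓ₂−1} define b_{k₁,k₂} := (1/(ℓ₁ℓ₂))·Σ_{n=0}^{ℓ₁−1}Σ_{m=0}^{ℓ₂−1} e^{−2πi(p₁(n−n₀)²/q₁ + p₁₂(n−n₀)(m−m₀)/q₁₂ + p₂(m−m₀)²/q₂)}·e^{2πik₁n/ℓ₁}·e^{2πik₂m/ℓ₂}, and for positive integers ℓ, p and k ∈ {0,…,ℓ−1} define d_k(ℓ,p) := (1/ℓ)·Σ_{x=0}^{ℓ−1} e^{−2πip(x−n₀)²/ℓ}·e^{2πikx/ℓ}. Then |b_{k₁,k₂}|² = |d_{k₁}(ℓ₁, p₁s₁)|² · |d_{k₂}(ℓ₂, p₂s₂)|². -/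

import Mathlib

set_option maxHeartbeats 1000000


open Real

noncomputable section

/-- The coefficient `b_{k₁,k₂}` from the resonance decomposition: with `s_j = q₁₂ p_j`,
`ℓ_j = q_j s_j`,
`b_{k₁,k₂} = (1/(ℓ₁ℓ₂)) Σ_{n<ℓ₁} Σ_{m<ℓ₂}
e^{−2πi(p₁(n−n₀)²/q₁ + p₁₂(n−n₀)(m−m₀)/q₁₂ + p₂(m−m₀)²/q₂)} e^{2πik₁n/ℓ₁} e^{2πik₂m/ℓ₂}`. -/
def bcoef (n₀ m₀ : ℤ) (p₁ q₁ p₂ q₂ p₁₂ q₁₂ : ℕ) (k₁ k₂ : ℕ) : ℂ :=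
  (1 / (((q₁ * (q₁₂ * p₁) : ℕ) : ℂ) * ((q₂ * (q₁₂ * p₂) : ℕ) : ℂ))) *
    ∑ n ∈ Finset.range (q₁ * (q₁₂ * p₁)), ∑ m ∈ Finset.range (q₂ * (q₁₂ * p₂)),
      Complex.exp (-(2 * (π : ℂ) * Complex.I) *
        (((p₁ : ℝ) * ((n : ℝ) - (n₀ : ℝ)) ^ 2 / (q₁ : ℝ)
          + (p₁₂ : ℝ) * ((n : ℝ) - (n₀ : ℝ)) * ((m : ℝ) - (m₀ : ℝ)) / (q₁₂ : ℝ)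
          + (p₂ : ℝ) * ((m : ℝ) - (m₀ : ℝ)) ^ 2 / (q₂ : ℝ) : ℝ) : ℂ)) *
      Complex.exp ((2 * (π : ℂ) * Complex.I) *
        (((k₁ : ℝ) * (n : ℝ) / ((q₁ * (q₁₂ * p₁) : ℕ) : ℝ) : ℝ) : ℂ)) *
      Complex.exp ((2 * (π : ℂ) * Complex.I) *
        (((k₂ : ℝ) * (m : ℝ) / ((q₂ * (q₁₂ * p₂) : ℕ) : ℝ) : ℝ) : ℂ))

/-- The fractional-revival coefficient `c_{k₁,k₂} = e^{−2πik₁n₀/ℓ₁} e^{−2πik₂m₀/ℓ₂} b_{k₁,k₂}`. -/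
def ccoef (n₀ m₀ : ℤ) (p₁ q₁ p₂ q₂ p₁₂ q₁₂ : ℕ) (k₁ k₂ : ℕ) : ℂ :=
  Complex.exp (-(2 * (π : ℂ) * Complex.I) *
      (((k₁ : ℝ) * (n₀ : ℝ) / ((q₁ * (q₁₂ * p₁) : ℕ) : ℝ) : ℝ) : ℂ)) *
    Complex.exp (-(2 * (π : ℂ) * Complex.I) *
      (((k₂ : ℝ) * (m₀ : ℝ) / ((q₂ * (q₁₂ * p₂) : ℕ) : ℝ) : ℝ) : ℂ)) *
    bcoef n₀ m₀ p₁ q₁ p₂ q₂ p₁₂ q₁₂ k₁ k₂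

/-- The Gauss-type sum `d_k(ℓ,p) = (1/ℓ) Σ_{x<ℓ} e^{−2πip(x−n₀)²/ℓ} e^{2πikx/ℓ}`. -/
def dcoef (n₀ : ℤ) (ℓ p k : ℕ) : ℂ :=
  (1 / (ℓ : ℂ)) * ∑ x ∈ Finset.range ℓ,
    Complex.exp (-(2 * (π : ℂ) * Complex.I) *
      (((p : ℝ) * ((x : ℝ) - (n₀ : ℝ)) ^ 2 / (ℓ : ℝ) : ℝ) : ℂ)) *
    Complex.exp ((2 * (π : ℂ) * Complex.I) * (((k : ℝ) * (x : ℝ) / (ℓ : ℝ) : ℝ) : ℂ))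

def efn (ℓ : ℕ) (t : ℤ) : ℂ := Complex.exp (2 * (π:ℂ) * Complex.I * t / ℓ)

lemma efn_add (ℓ : ℕ) (s t : ℤ) : efn ℓ (s + t) = efn ℓ s * efn ℓ t := by
  rw [efn, efn, efn, ← Complex.exp_add]
  congr 1
  push_cast
  ring

lemma efn_mul_self (ℓ : ℕ) (hℓ : 0 < ℓ) (u : ℤ) : efn ℓ (ℓ * u) = 1 := by
  rw [efn]
  have hne : (ℓ:ℂ) ≠ 0 := Nat.cast_ne_zero.mpr hℓ.ne'
  have h : 2 * (π:ℂ) * Complex.I * ((ℓ * u : ℤ) : ℂ) / (ℓ:ℂ) = u * (2 * π * Complex.I) := by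
    push_cast
    field_simp
  rw [h, Complex.exp_int_mul_two_pi_mul_I]

lemma efn_congr (ℓ : ℕ) (hℓ : 0 < ℓ) {s t : ℤ} (h : s ≡ t [ZMOD (ℓ:ℤ)]) :
    efn ℓ s = efn ℓ t := by
  obtain ⟨u, hu⟩ := Int.ModEq.dvd h
  have hs : s = t + (ℓ:ℤ) * (-u) := by linarith
  rw [hs, efn_add, efn_mul_self ℓ hℓ, mul_one]

lemma abs_efn (ℓ : ℕ) (t : ℤ) : ‖efn ℓ t‖ = 1 := by
  rw [efn, Complex.norm_exp]
  have : (2 * (π:ℂ) * Complex.I * t / ℓ).re = 0 := by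
    simp [Complex.div_re, Complex.mul_re, Complex.mul_im]
  rw [this, Real.exp_zero]

lemma dcoef_eq (n₀ : ℤ) (ℓ p k : ℕ) (hℓ : 0 < ℓ) :
    dcoef n₀ ℓ p k
      = (1/(ℓ:ℂ)) * ∑ x ∈ Finset.range ℓ,
          efn ℓ ((k:ℤ) * (x:ℤ) - (p:ℤ) * ((x:ℤ) - n₀)^2) := by
  rw [dcoef]
  congr 1
  refine Finset.sum_congr rfl fun x _ => ?_
  rw [efn, ← Complex.exp_add]
  congr 1
  have hne : (ℓ:ℂ) ≠ 0 := Nat.cast_ne_zero.mpr hℓ.ne'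
  push_cast
  field_simp
  ring

lemma abs_sum_shift (ℓ p k : ℕ) (hℓ : 0 < ℓ) (a b : ℤ) :
    ‖∑ x ∈ Finset.range ℓ, efn ℓ ((k:ℤ) * x - (p:ℤ) * ((x:ℤ) - a)^2)‖
      = ‖∑ x ∈ Finset.range ℓ, efn ℓ ((k:ℤ) * x - (p:ℤ) * ((x:ℤ) - b)^2)‖ := by
  haveI : NeZero ℓ := ⟨hℓ.ne'⟩
  have key : ∀ c : ℤ, (∑ x ∈ Finset.range ℓ, efn ℓ ((k:ℤ) * x - (p:ℤ) * ((x:ℤ) - c)^2))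
      = ∑ z : ZMod ℓ, efn ℓ ((k:ℤ) * (z.val:ℤ) - (p:ℤ) * ((z.val:ℤ) - c)^2) := by
    intro c
    refine Finset.sum_nbij' (fun x => (x : ZMod ℓ)) (fun z => z.val) ?_ ?_ ?_ ?_ ?_
    · intro x _; exact Finset.mem_univ _
    · intro z _; exact Finset.mem_range.mpr (ZMod.val_lt z)
    · intro x hx; exact ZMod.val_cast_of_lt (Finset.mem_range.mp hx)
    · intro z _; simp [ZMod.natCast_val, ZMod.cast_id]
    · intro x hx; rw [ZMod.val_cast_of_lt (Finset.mem_range.mp hx)]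
  rw [key a, key b]
  obtain ⟨c, hcint⟩ : ∃ c : ℕ, (c:ℤ) ≡ b - a [ZMOD (ℓ:ℤ)] := by
    refine ⟨((b - a) % (ℓ:ℤ)).toNat, ?_⟩
    have h0 : (0:ℤ) ≤ (b - a) % (ℓ:ℤ) := Int.emod_nonneg _ (by exact_mod_cast hℓ.ne')
    rw [Int.toNat_of_nonneg h0]
    exact Int.emod_emod_of_dvd _ dvd_rfl
  have hshift := Equiv.sum_comp (Equiv.addRight ((c:ℕ) : ZMod ℓ))
      (fun z : ZMod ℓ => efn ℓ ((k:ℤ) * (z.val:ℤ) - (p:ℤ) * ((z.val:ℤ) - b)^2))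
  rw [← hshift]
  have hterm : ∀ z : ZMod ℓ,
      efn ℓ ((k:ℤ) * (((z + ((c:ℕ) : ZMod ℓ)).val : ℕ) : ℤ)
        - (p:ℤ) * ((((z + ((c:ℕ) : ZMod ℓ)).val : ℕ) : ℤ) - b)^2)
      = efn ℓ ((k:ℤ) * (c:ℤ)) * efn ℓ ((k:ℤ) * (z.val:ℤ) - (p:ℤ) * ((z.val:ℤ) - a)^2) := by
    intro z
    set w : ℤ := (((z + ((c:ℕ) : ZMod ℓ)).val : ℕ) : ℤ) with hwdef
    have hw : w ≡ (z.val:ℤ) + c [ZMOD (ℓ:ℤ)] := by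
      have h1 : (z + ((c:ℕ) : ZMod ℓ)).val = (z.val + c % ℓ) % ℓ := by
        rw [ZMod.val_add, ZMod.val_natCast]
      have hn : (z.val + c % ℓ) % ℓ = (z.val + c) % ℓ :=
        (Nat.ModEq.refl z.val).add (Nat.mod_modEq c ℓ)
      rw [hwdef, h1, hn, Int.natCast_mod]
      push_cast
      exact Int.emod_emod_of_dvd _ dvd_rfl
    have hd : w - b ≡ (z.val:ℤ) - a [ZMOD (ℓ:ℤ)] := by
      have h1 := (hw.sub_right b).trans
        (((Int.ModEq.refl ((z.val:ℕ):ℤ)).add hcint).sub_right b)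
      rwa [show ((z.val:ℕ):ℤ) + (b - a) - b = ((z.val:ℕ):ℤ) - a from by ring] at h1
    have hfin : (k:ℤ) * w - (p:ℤ) * (w - b)^2
        ≡ (k:ℤ) * (c:ℤ) + ((k:ℤ) * (z.val:ℤ) - (p:ℤ) * ((z.val:ℤ) - a)^2) [ZMOD (ℓ:ℤ)] := by
      have h := (hw.mul_left (k:ℤ)).sub ((hd.pow 2).mul_left (p:ℤ))
      refine h.trans ?_
      rw [show (k:ℤ) * ((z.val:ℤ) + c) - (p:ℤ) * ((z.val:ℤ) - a)^2
          = (k:ℤ) * (c:ℤ) + ((k:ℤ) * (z.val:ℤ) - (p:ℤ) * ((z.val:ℤ) - a)^2) from by ring]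
    rw [efn_congr ℓ hℓ hfin, efn_add]
  simp only [Equiv.coe_addRight, hterm]
  rw [← Finset.mul_sum, norm_mul, abs_efn, one_mul]

lemma abs_dcoef_shift (ℓ p k : ℕ) (hℓ : 0 < ℓ) (a b : ℤ) :
    ‖dcoef a ℓ p k‖ = ‖dcoef b ℓ p k‖ := by
  rw [dcoef_eq a ℓ p k hℓ, dcoef_eq b ℓ p k hℓ, norm_mul, norm_mul,
    abs_sum_shift ℓ p k hℓ a b]

lemma bcoef_factor (n₀ m₀ : ℤ) (p₁ q₁ p₂ q₂ p₁₂ q₁₂ : ℕ)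
    (hp₁ : 0 < p₁) (hq₁ : 0 < q₁) (hp₂ : 0 < p₂) (hq₂ : 0 < q₂) (hq₁₂ : 0 < q₁₂)
    (hdvd : q₁₂ ∣ p₁₂) (k₁ k₂ : ℕ) :
    bcoef n₀ m₀ p₁ q₁ p₂ q₂ p₁₂ q₁₂ k₁ k₂
      = dcoef n₀ (q₁ * (q₁₂ * p₁)) (p₁ * (q₁₂ * p₁)) k₁ *
        dcoef m₀ (q₂ * (q₁₂ * p₂)) (p₂ * (q₁₂ * p₂)) k₂ := by
  obtain ⟨t, rfl⟩ := hdvd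
  have hℓ₁ : 0 < q₁ * (q₁₂ * p₁) := by positivity
  have hℓ₂ : 0 < q₂ * (q₁₂ * p₂) := by positivity
  rw [dcoef_eq n₀ _ _ _ hℓ₁, dcoef_eq m₀ _ _ _ hℓ₂, bcoef]
  have hp₁c : ((p₁:ℕ) : ℂ) ≠ 0 := Nat.cast_ne_zero.mpr hp₁.ne'
  have hp₂c : ((p₂:ℕ) : ℂ) ≠ 0 := Nat.cast_ne_zero.mpr hp₂.ne'
  have hq₁c : ((q₁:ℕ) : ℂ) ≠ 0 := Nat.cast_ne_zero.mpr hq₁.ne'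
  have hq₂c : ((q₂:ℕ) : ℂ) ≠ 0 := Nat.cast_ne_zero.mpr hq₂.ne'
  have hq₁₂c : ((q₁₂:ℕ) : ℂ) ≠ 0 := Nat.cast_ne_zero.mpr hq₁₂.ne'
  have hℓ₁c : ((q₁ * (q₁₂ * p₁) : ℕ) : ℂ) ≠ 0 := Nat.cast_ne_zero.mpr hℓ₁.ne'
  have hℓ₂c : ((q₂ * (q₁₂ * p₂) : ℕ) : ℂ) ≠ 0 := Nat.cast_ne_zero.mpr hℓ₂.ne'
  have hsum : (∑ n ∈ Finset.range (q₁ * (q₁₂ * p₁)), ∑ m ∈ Finset.range (q₂ * (q₁₂ * p₂)),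
      Complex.exp (-(2 * (π : ℂ) * Complex.I) *
        (((p₁ : ℝ) * ((n : ℝ) - (n₀ : ℝ)) ^ 2 / (q₁ : ℝ)
          + ((q₁₂ * t : ℕ) : ℝ) * ((n : ℝ) - (n₀ : ℝ)) * ((m : ℝ) - (m₀ : ℝ)) / (q₁₂ : ℝ)
          + (p₂ : ℝ) * ((m : ℝ) - (m₀ : ℝ)) ^ 2 / (q₂ : ℝ) : ℝ) : ℂ)) *
      Complex.exp ((2 * (π : ℂ) * Complex.I) *
        (((k₁ : ℝ) * (n : ℝ) / ((q₁ * (q₁₂ * p₁) : ℕ) : ℝ) : ℝ) : ℂ)) *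
      Complex.exp ((2 * (π : ℂ) * Complex.I) *
        (((k₂ : ℝ) * (m : ℝ) / ((q₂ * (q₁₂ * p₂) : ℕ) : ℝ) : ℝ) : ℂ)))
      = (∑ n ∈ Finset.range (q₁ * (q₁₂ * p₁)),
          efn (q₁ * (q₁₂ * p₁)) ((k₁:ℤ) * n - ((p₁ * (q₁₂ * p₁) : ℕ) : ℤ) * ((n:ℤ) - n₀)^2)) *
        (∑ m ∈ Finset.range (q₂ * (q₁₂ * p₂)),
          efn (q₂ * (q₁₂ * p₂)) ((k₂:ℤ) * m - ((p₂ * (q₁₂ * p₂) : ℕ) : ℤ) * ((m:ℤ) - m₀)^2)) := by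
    rw [Finset.sum_mul_sum]
    refine Finset.sum_congr rfl fun n _ => ?_
    refine Finset.sum_congr rfl fun m _ => ?_
    have hone : Complex.exp (((-((t:ℤ) * ((n:ℤ) - n₀) * ((m:ℤ) - m₀)) : ℤ) : ℂ) * (2 * π * Complex.I)) = 1 :=
      Complex.exp_int_mul_two_pi_mul_I _
    rw [show efn (q₁ * (q₁₂ * p₁)) ((k₁:ℤ) * n - ((p₁ * (q₁₂ * p₁) : ℕ) : ℤ) * ((n:ℤ) - n₀)^2) *
          efn (q₂ * (q₁₂ * p₂)) ((k₂:ℤ) * m - ((p₂ * (q₁₂ * p₂) : ℕ) : ℤ) * ((m:ℤ) - m₀)^2)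
        = efn (q₁ * (q₁₂ * p₁)) ((k₁:ℤ) * n - ((p₁ * (q₁₂ * p₁) : ℕ) : ℤ) * ((n:ℤ) - n₀)^2) *
          efn (q₂ * (q₁₂ * p₂)) ((k₂:ℤ) * m - ((p₂ * (q₁₂ * p₂) : ℕ) : ℤ) * ((m:ℤ) - m₀)^2) *
          Complex.exp (((-((t:ℤ) * ((n:ℤ) - n₀) * ((m:ℤ) - m₀)) : ℤ) : ℂ) * (2 * π * Complex.I)) from by
      rw [hone, mul_one]]
    rw [efn, efn, ← Complex.exp_add, ← Complex.exp_add, ← Complex.exp_add, ← Complex.exp_add]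
    congr 1
    push_cast
    have E1 : (p₁:ℂ)*((q₁₂:ℂ)*(p₁:ℂ))*((n:ℂ) - (n₀:ℂ))^2/((q₁:ℂ)*((q₁₂:ℂ)*(p₁:ℂ)))
        = (p₁:ℂ)*((n:ℂ) - (n₀:ℂ))^2/(q₁:ℂ) := by
      rw [show (p₁:ℂ)*((q₁₂:ℂ)*(p₁:ℂ))*((n:ℂ) - (n₀:ℂ))^2
          = ((q₁₂:ℂ)*(p₁:ℂ))*((p₁:ℂ)*((n:ℂ) - (n₀:ℂ))^2) from by ring,
        show (q₁:ℂ)*((q₁₂:ℂ)*(p₁:ℂ)) = ((q₁₂:ℂ)*(p₁:ℂ))*(q₁:ℂ) from by ring,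
        mul_div_mul_left _ _ (mul_ne_zero hq₁₂c hp₁c)]
    have E2 : (p₂:ℂ)*((q₁₂:ℂ)*(p₂:ℂ))*((m:ℂ) - (m₀:ℂ))^2/((q₂:ℂ)*((q₁₂:ℂ)*(p₂:ℂ)))
        = (p₂:ℂ)*((m:ℂ) - (m₀:ℂ))^2/(q₂:ℂ) := by
      rw [show (p₂:ℂ)*((q₁₂:ℂ)*(p₂:ℂ))*((m:ℂ) - (m₀:ℂ))^2
          = ((q₁₂:ℂ)*(p₂:ℂ))*((p₂:ℂ)*((m:ℂ) - (m₀:ℂ))^2) from by ring,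
        show (q₂:ℂ)*((q₁₂:ℂ)*(p₂:ℂ)) = ((q₁₂:ℂ)*(p₂:ℂ))*(q₂:ℂ) from by ring,
        mul_div_mul_left _ _ (mul_ne_zero hq₁₂c hp₂c)]
    have E3 : (q₁₂:ℂ)*(t:ℂ)*((n:ℂ) - (n₀:ℂ))*((m:ℂ) - (m₀:ℂ))/(q₁₂:ℂ)
        = (t:ℂ)*((n:ℂ) - (n₀:ℂ))*((m:ℂ) - (m₀:ℂ)) := by
      rw [show (q₁₂:ℂ)*(t:ℂ)*((n:ℂ) - (n₀:ℂ))*((m:ℂ) - (m₀:ℂ))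
          = (q₁₂:ℂ)*((t:ℂ)*((n:ℂ) - (n₀:ℂ))*((m:ℂ) - (m₀:ℂ))) from by ring,
        mul_div_cancel_left₀ _ hq₁₂c]
    linear_combination (2*(π:ℂ)*Complex.I) * E1 + (2*(π:ℂ)*Complex.I) * E2
      - (2*(π:ℂ)*Complex.I) * E3
  rw [hsum]
  ring

/-- if `q₁₂ ∣ p₁₂`, then with `s_j = q₁₂p_j` and `ℓ_j = q_js_j`,
`|b_{k₁,k₂}|² = |d_{k₁}(ℓ₁,p₁s₁)|² |d_{k₂}(ℓ₂,p₂s₂)|²`. -/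
theorem revival_coefficient_modulus
    (p₁ q₁ p₂ q₂ p₁₂ q₁₂ : ℕ)
    (hp₁ : 0 < p₁) (hq₁ : 0 < q₁) (hp₂ : 0 < p₂) (hq₂ : 0 < q₂)
    (hp₁₂ : 0 < p₁₂) (hq₁₂ : 0 < q₁₂)
    (hdvd : q₁₂ ∣ p₁₂)
    (n₀ m₀ : ℤ)
    (k₁ k₂ : ℕ) (hk₁ : k₁ < q₁ * (q₁₂ * p₁)) (hk₂ : k₂ < q₂ * (q₁₂ * p₂)) :
    ‖bcoef n₀ m₀ p₁ q₁ p₂ q₂ p₁₂ q₁₂ k₁ k₂‖ ^ 2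
      = ‖dcoef n₀ (q₁ * (q₁₂ * p₁)) (p₁ * (q₁₂ * p₁)) k₁‖ ^ 2 *
        ‖dcoef n₀ (q₂ * (q₁₂ * p₂)) (p₂ * (q₁₂ * p₂)) k₂‖ ^ 2 := by
  have hℓ₂ : 0 < q₂ * (q₁₂ * p₂) := by positivity
  rw [bcoef_factor n₀ m₀ p₁ q₁ p₂ q₂ p₁₂ q₁₂ hp₁ hq₁ hp₂ hq₂ hq₁₂ hdvd k₁ k₂, norm_mul, mul_pow,
    abs_dcoef_shift _ _ _ hℓ₂ m₀ n₀]
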